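/- The function g₂(b) = h₂(b)/h₂'(b) is increasing on (0,∞), satisfies lim_{b↓0} g₂(b) = (2η−μ)/(2δ), and lim_{b↑∞} g₂(b) = 1/θ₊. -/

import Mathlib

open Real Filter Set

/-- Positive root θ₊ of (σ²/2)r² + ηr − δ = 0. -/
noncomputable def thetaP (σ η δ : ℝ) : ℝ := (-η + Real.sqrt (η ^ 2 + 2 * σ ^ 2 * δ)) / σ ^ 2

/-- Negative root θ₋ of (σ²/2)r² + ηr − δ = 0. -/
noncomputable def thetaM (σ η δ : ℝ) : ℝ := (-η - Real.sqrt (η ^ 2 + 2 * σ ^ 2 * δ)) / σ ^ 2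

/-- a₁ = 1 − θ₋(2η−μ)/(2δ). -/
noncomputable def a1 (σ η δ μ : ℝ) : ℝ := 1 - thetaM σ η δ * (2 * η - μ) / (2 * δ)

/-- a₂ = 1 − θ₊(2η−μ)/(2δ). -/
noncomputable def a2 (σ η δ μ : ℝ) : ℝ := 1 - thetaP σ η δ * (2 * η - μ) / (2 * δ)

/-- h₂(x) = (a₁e^{θ₊x} − a₂e^{θ₋x})/(θ₊ − θ₋). -/
noncomputable def h2 (σ η δ μ : ℝ) (x : ℝ) : ℝ :=
  (a1 σ η δ μ * Real.exp (thetaP σ η δ * x) - a2 σ η δ μ * Real.exp (thetaM σ η δ * x)) /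
    (thetaP σ η δ - thetaM σ η δ)

/-- h₂'(x). -/
noncomputable def h2' (σ η δ μ : ℝ) (x : ℝ) : ℝ :=
  (a1 σ η δ μ * thetaP σ η δ * Real.exp (thetaP σ η δ * x) -
      a2 σ η δ μ * thetaM σ η δ * Real.exp (thetaM σ η δ * x)) /
    (thetaP σ η δ - thetaM σ η δ)

/-- g₂(b) = h₂(b)/h₂'(b). -/
noncomputable def g2 (σ η δ μ : ℝ) (b : ℝ) : ℝ := h2 σ η δ μ b / h2' σ η δ μ b

/-! With `u(b) = A e^{pb} - B e^{mb}`, `A, B > 0`, `m < 0 < p`, we have `g₂ = u / u'`, and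
cross-multiplying, `u(b₁) u'(b₂) - u(b₂) u'(b₁)` equals
`AB(p - m)(e^{pb₁ + mb₂} - e^{pb₂ + mb₁})`, which is negative for `b₁ < b₂`. Dividing by `e^{pb}`
gives the limit `A / (Ap) = 1/θ₊` at infinity, and at `0` the value is `(a₁ - a₂)/(a₁θ₊ - a₂θ₋)`,
where `a₁θ₊ - a₂θ₋ = θ₊ - θ₋` and `a₁ - a₂ = (θ₊ - θ₋)(2η - μ)/(2δ)`. -/

open Topology

noncomputable def expDiffRatio (p m A B b : ℝ) : ℝ :=
  (A * exp (p * b) - B * exp (m * b)) / (A * p * exp (p * b) - B * m * exp (m * b))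

section expDiffRatio

variable {p m A B : ℝ}

lemma expDiffRatio_denom_pos (hp : 0 < p) (hm : m < 0) (hA : 0 < A) (hB : 0 < B) (b : ℝ) :
    0 < A * p * exp (p * b) - B * m * exp (m * b) := by
  have hpos : 0 < A * p * exp (p * b) := by positivity
  have hneg : B * m * exp (m * b) < 0 := mul_neg_of_neg_of_pos (mul_neg_of_pos_of_neg hB hm) (exp_pos _)
  linarith

lemma strictMono_expDiffRatio (hp : 0 < p) (hm : m < 0) (hA : 0 < A) (hB : 0 < B) :
    StrictMono (expDiffRatio p m A B) := by
  intro b₁ b₂ hb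
  rw [expDiffRatio, expDiffRatio, div_lt_div_iff₀ (expDiffRatio_denom_pos hp hm hA hB b₁)
    (expDiffRatio_denom_pos hp hm hA hB b₂)]
  have hexp : exp (p * b₁) * exp (m * b₂) < exp (p * b₂) * exp (m * b₁) := by
    rw [← exp_add, ← exp_add, exp_lt_exp]
    nlinarith
  have hgap : 0 < A * B * (p - m) *
      (exp (p * b₂) * exp (m * b₁) - exp (p * b₁) * exp (m * b₂)) :=
    mul_pos (mul_pos (mul_pos hA hB) (by linarith)) (sub_pos.2 hexp)
  linear_combination hgap

lemma continuous_expDiffRatio (hp : 0 < p) (hm : m < 0) (hA : 0 < A) (hB : 0 < B) :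
    Continuous (expDiffRatio p m A B) := by
  unfold expDiffRatio
  exact Continuous.div (by fun_prop) (by fun_prop) fun b ↦
    (expDiffRatio_denom_pos hp hm hA hB b).ne'

lemma expDiffRatio_zero : expDiffRatio p m A B 0 = (A - B) / (A * p - B * m) := by
  simp [expDiffRatio]

lemma tendsto_expDiffRatio_atTop (hmp : m < p) (hA : A ≠ 0) (hp : p ≠ 0) :
    Tendsto (expDiffRatio p m A B) atTop (𝓝 p⁻¹) := by
  have hdecay : Tendsto (fun b ↦ exp ((m - p) * b)) atTop (𝓝 0) :=
    tendsto_exp_atBot.comp (tendsto_id.const_mul_atTop_of_neg (sub_neg.2 hmp))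
  have hscaled : expDiffRatio p m A B =
      fun b ↦ (A - B * exp ((m - p) * b)) / (A * p - B * m * exp ((m - p) * b)) := by
    funext b
    rw [expDiffRatio, ← mul_div_mul_right (A - _) _ (exp_pos (p * b)).ne']
    congr 1 <;> rw [sub_mul, mul_assoc _ (exp _), ← exp_add] <;> ring_nf
  rw [hscaled, ← div_mul_cancel_left₀ hA p]
  refine Tendsto.div ?_ ?_ (mul_ne_zero hA hp) <;>
    simpa using tendsto_const_nhds.sub (hdecay.const_mul _)

end expDiffRatio

lemma abs_lt_sqrt_discrim {σ η δ : ℝ} (hσ : σ ≠ 0) (hδ : 0 < δ) :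
    |η| < √(η ^ 2 + 2 * σ ^ 2 * δ) := by
  rw [lt_sqrt (abs_nonneg η), sq_abs]
  have : 0 < σ ^ 2 * δ := by positivity
  linarith

lemma thetaP_pos {σ η δ : ℝ} (hσ : σ ≠ 0) (hδ : 0 < δ) : 0 < thetaP σ η δ := by
  have := abs_lt_sqrt_discrim (η := η) hσ hδ
  exact div_pos (by linarith [le_abs_self η]) (by positivity)

lemma thetaM_neg {σ η δ : ℝ} (hσ : σ ≠ 0) (hδ : 0 < δ) : thetaM σ η δ < 0 := by
  have := abs_lt_sqrt_discrim (η := η) hσ hδ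
  exact div_neg_of_neg_of_pos (by linarith [neg_abs_le η]) (by positivity)

lemma thetaP_isRoot {σ η δ : ℝ} (hσ : σ ≠ 0) (hδ : 0 < δ) :
    σ ^ 2 / 2 * thetaP σ η δ ^ 2 + η * thetaP σ η δ = δ := by
  have hs := sq_sqrt (show 0 ≤ η ^ 2 + 2 * σ ^ 2 * δ by positivity)
  rw [thetaP]
  generalize √(η ^ 2 + 2 * σ ^ 2 * δ) = s at hs
  field_simp
  linear_combination hs

lemma a1_pos {σ η δ μ : ℝ} (hσ : σ ≠ 0) (hδ : 0 < δ) (hμη : μ < 2 * η) : 0 < a1 σ η δ μ := by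
  have hm := thetaM_neg (η := η) hσ hδ
  have : thetaM σ η δ * (2 * η - μ) / (2 * δ) < 0 :=
    div_neg_of_neg_of_pos (mul_neg_of_neg_of_pos hm (by linarith)) (by linarith)
  rw [a1]
  linarith

lemma a2_pos {σ η δ μ : ℝ} (hσ : σ ≠ 0) (hδ : 0 < δ) (hμ : 0 < μ) : 0 < a2 σ η δ μ := by
  have hp := thetaP_pos (η := η) hσ hδ
  have hroot := thetaP_isRoot (η := η) hσ hδ
  have hgap : 0 < σ ^ 2 * thetaP σ η δ ^ 2 + μ * thetaP σ η δ := by positivity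
  have hlt : thetaP σ η δ * (2 * η - μ) < 2 * δ := by linear_combination hgap + 2 * hroot
  rw [a2, sub_pos, div_lt_one (by linarith)]
  exact hlt

lemma a1_sub_a2 (σ η δ μ : ℝ) :
    a1 σ η δ μ - a2 σ η δ μ = (thetaP σ η δ - thetaM σ η δ) * ((2 * η - μ) / (2 * δ)) := by
  rw [a1, a2]
  ring

lemma a1_mul_thetaP_sub_a2_mul_thetaM (σ η δ μ : ℝ) :
    a1 σ η δ μ * thetaP σ η δ - a2 σ η δ μ * thetaM σ η δ = thetaP σ η δ - thetaM σ η δ := by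
  rw [a1, a2]
  ring

lemma g2_eq_expDiffRatio {σ η δ μ : ℝ} (h : thetaP σ η δ ≠ thetaM σ η δ) :
    g2 σ η δ μ = expDiffRatio (thetaP σ η δ) (thetaM σ η δ) (a1 σ η δ μ) (a2 σ η δ μ) := by
  funext b
  exact div_div_div_cancel_right₀ (sub_ne_zero.2 h) _ _

theorem g2_monotone_and_limits_general (σ η δ μ : ℝ)
    (hσ : 0 < σ) (hδ : 0 < δ) (hμ : 0 < μ) (hμ2 : μ < 2 * η) :
    MonotoneOn (g2 σ η δ μ) (Set.Ioi 0) ∧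
    Tendsto (g2 σ η δ μ) (nhdsWithin 0 (Set.Ioi 0)) (nhds ((2 * η - μ) / (2 * δ))) ∧
    Tendsto (g2 σ η δ μ) atTop (nhds (1 / thetaP σ η δ)) := by
  have hp := thetaP_pos (η := η) hσ.ne' hδ
  have hm := thetaM_neg (η := η) hσ.ne' hδ
  have hA := a1_pos (μ := μ) hσ.ne' hδ hμ2
  have hB := a2_pos (η := η) hσ.ne' hδ hμ
  rw [g2_eq_expDiffRatio (hm.trans hp).ne', one_div]
  refine ⟨(strictMono_expDiffRatio hp hm hA hB).monotone.monotoneOn _, ?_,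
    tendsto_expDiffRatio_atTop (hm.trans hp) hA.ne' hp.ne'⟩
  have hzero := (continuous_expDiffRatio hp hm hA hB).continuousWithinAt
    (s := Ioi 0) (x := 0) |>.tendsto
  rwa [expDiffRatio_zero, a1_sub_a2, a1_mul_thetaP_sub_a2_mul_thetaM,
    mul_div_cancel_left₀ _ (sub_pos.2 (hm.trans hp)).ne'] at hzero

theorem g2_monotone_and_limits (σ η δ μ : ℝ)
    (hσ : 0 < σ) (hη : 0 < η) (hδ : 0 < δ) (hμ : 0 < μ) (hμ2 : μ < 2 * η) :
    MonotoneOn (g2 σ η δ μ) (Set.Ioi 0) ∧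
    Tendsto (g2 σ η δ μ) (nhdsWithin 0 (Set.Ioi 0)) (nhds ((2 * η - μ) / (2 * δ))) ∧
    Tendsto (g2 σ η δ μ) atTop (nhds (1 / thetaP σ η δ)) :=
  g2_monotone_and_limits_general σ η δ μ hσ hδ hμ hμ2
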